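/- For all real β with 0 < β ≤ 1/2 and all integers m ≥ 1, P₁(2,β) + P₂(2,β) ≥ P₁(m,β) + P₂(m,β), where P₁(m,β) = m·β^(m-1)·(1-β) and P₂(m,β) = (m choose 2)·β^(m-2)·(1-β)². That is, degree 2 maximizes the probability of a Case-1 or Case-2 coded symbol when the recovery rate is at most 1/2. -/
import Mathlib


/-- Probability that a degree-`m` coded symbol contains exactly one unrecovered symbol. -/
noncomputable def P1 (m : ℕ) (β : ℝ) : ℝ := m * β ^ (m - 1) * (1 - β)

/-- Probability that a degree-`m` coded symbol contains exactly two unrecovered symbols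
(`P2 1 β = 0` since `Nat.choose 1 2 = 0`). -/
noncomputable def P2 (m : ℕ) (β : ℝ) : ℝ := (m.choose 2) * β ^ (m - 2) * (1 - β) ^ 2

lemma c2 (k : ℕ) : 2 * (k + 2).choose 2 = (k + 2) * (k + 1) := by
  induction k with
  | zero => rfl
  | succ n ih =>
    rw [show n + 1 + 2 = (n + 2) + 1 from rfl, Nat.choose_succ_succ, Nat.mul_add, ih,
      Nat.choose_one_right]
    ring

lemma key (β : ℝ) (hβ0 : 0 < β) (hβ : β ≤ 1 / 2) (k : ℕ) :
    β ^ k * (2 * ((k : ℝ) + 2) * β + ((k : ℝ) + 2) * ((k : ℝ) + 1) * (1 - β)) ≤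
      2 * (1 + β) := by
  induction k with
  | zero => norm_num; nlinarith
  | succ n ih =>
    have hstep : β * (((n : ℝ) + 3) * (2 * β + ((n : ℝ) + 2) * (1 - β))) ≤
        ((n : ℝ) + 2) * (2 * β + ((n : ℝ) + 1) * (1 - β)) := by
      have h12 : 0 ≤ 1 - 2 * β := by linarith
      have hn : (0 : ℝ) ≤ (n : ℝ) := Nat.cast_nonneg n
      nlinarith [sq_nonneg β, mul_nonneg hn (sq_nonneg β), mul_nonneg hn h12,
        mul_nonneg (mul_nonneg hn hn) h12]
    have hpow : (0 : ℝ) ≤ β ^ n := pow_nonneg hβ0.le n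
    push_cast
    calc β ^ (n + 1) * (2 * ((n : ℝ) + 1 + 2) * β + ((n : ℝ) + 1 + 2) * ((n : ℝ) + 1 + 1) * (1 - β))
        = β ^ n * (β * (((n : ℝ) + 3) * (2 * β + ((n : ℝ) + 2) * (1 - β)))) := by ring
      _ ≤ β ^ n * (((n : ℝ) + 2) * (2 * β + ((n : ℝ) + 1) * (1 - β))) :=
          mul_le_mul_of_nonneg_left hstep hpow
      _ = β ^ n * (2 * ((n : ℝ) + 2) * β + ((n : ℝ) + 2) * ((n : ℝ) + 1) * (1 - β)) := by ring
      _ ≤ 2 * (1 + β) := by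
          have := ih
          push_cast at this ⊢
          linarith

/-- For recovery rate `β ≤ 1/2`, degree 2 maximizes the probability of a
Case-1 or Case-2 coded symbol. -/
theorem stmt_2 (β : ℝ) (hβ0 : 0 < β) (hβ : β ≤ 1 / 2) (m : ℕ) (hm : 1 ≤ m) :
    P1 m β + P2 m β ≤ P1 2 β + P2 2 β := by
  rcases Nat.lt_or_ge m 2 with h2 | h2
  · interval_cases m
    simp [P1, P2]
    nlinarith
  · obtain ⟨k, rfl⟩ : ∃ k, m = k + 2 := ⟨m - 2, by omega⟩
    have hc : ((k + 2).choose 2 : ℝ) = ((k : ℝ) + 2) * ((k : ℝ) + 1) / 2 := by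
      have h : ((2 * (k + 2).choose 2 : ℕ) : ℝ) = ((k : ℝ) + 2) * ((k : ℝ) + 1) := by
        rw [c2 k]; push_cast; ring
      push_cast at h
      linarith
    have hkey := key β hβ0 hβ k
    have h1β : 0 ≤ 1 - β := by linarith
    have H := mul_le_mul_of_nonneg_left hkey h1β
    simp only [P1, P2, Nat.add_sub_cancel, show k + 2 - 1 = k + 1 from rfl, hc]
    push_cast
    norm_num
    rw [pow_succ]
    nlinarith [H]
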